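/- First return map via the first hitting map of the interval model (Lemma 2.2). Let z ∈ P_c satisfy Im(F(z)) > 0 and ℓ := 2·Im(F(z))·cot β ≤ λ, and set s(x) = x + 1 + ℓ/2. If k(z) < ∞, then R(z) = r'_ℓ(s(Re(F(z)))) − 1 − ℓ/2 + i·Im(F(z)). -/

import Mathlib

open Complex Real Set
open scoped Classical

noncomputable section

/-- The reciprocal golden ratio Φ = (√5 − 1)/2. -/
def Phi : ℝ := (Real.sqrt 5 - 1) / 2

/-- β = (π − |α|)/2. -/
def beta {d : ℕ} (α : Fin d → ℝ) : ℝ := (π - ∑ k, α k) / 2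

/-- σ_j = β + α_1 + … + α_j (partial sums of the angles, shifted by β). -/
def sig {d : ℕ} (α : Fin d → ℝ) (j : ℕ) : ℝ :=
  beta α + ∑ k ∈ Finset.univ.filter (fun k : Fin d => (k : ℕ) < j), α k

/-- θ_j = Σ_{τ(k)<τ(j)} α_k − Σ_{k<j} α_k. -/
def theta {d : ℕ} (α : Fin d → ℝ) (τ : Equiv.Perm (Fin d)) (j : Fin d) : ℝ :=
  (∑ k ∈ Finset.univ.filter (fun k : Fin d => τ k < τ j), α k)
  - ∑ k ∈ Finset.univ.filter (fun k : Fin d => k < j), α k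

/-- The cone P_0 = {z ∈ ℍ : arg z ∈ [0, β)}. -/
def P0 {d : ℕ} (α : Fin d → ℝ) : Set ℂ :=
  {z : ℂ | 0 ≤ z.im ∧ 0 ≤ z.arg ∧ z.arg < beta α}

/-- The middle cones P_1, …, P_d (0-indexed by `j : Fin d`):
P_1 corresponds to arg ∈ [β, β+α_1], and P_j (j ≥ 2) to arg ∈ (σ_{j−1}, σ_j]. -/
def Pmid {d : ℕ} (α : Fin d → ℝ) (j : Fin d) : Set ℂ :=
  {z : ℂ | 0 ≤ z.im ∧
    (if (j : ℕ) = 0 then sig α 0 ≤ z.arg else sig α (j : ℕ) < z.arg) ∧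
    z.arg ≤ sig α ((j : ℕ) + 1)}

/-- The cone P_{d+1} = {z ∈ ℍ : arg z ∈ (π−β, π]}. -/
def Pend {d : ℕ} (α : Fin d → ℝ) : Set ℂ :=
  {z : ℂ | 0 ≤ z.im ∧ π - beta α < z.arg ∧ z.arg ≤ π}

/-- The middle cone P_c = P_1 ∪ … ∪ P_d. -/
def Pc {d : ℕ} (α : Fin d → ℝ) : Set ℂ := ⋃ j, Pmid α j

/-- The exchange map E. -/
def Emap {d : ℕ} (α : Fin d → ℝ) (τ : Equiv.Perm (Fin d)) (z : ℂ) : ℂ :=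
  if h : ∃ j, z ∈ Pmid α j then
    z * Complex.exp ((theta α τ h.choose : ℝ) * Complex.I)
  else z

/-- The translation map G. -/
def Gmap {d : ℕ} (α : Fin d → ℝ) (lam eta : ℝ) (z : ℂ) : ℂ :=
  if z ∈ P0 α then z - 1
  else if z ∈ Pend α then z + (lam : ℂ)
  else if z ∈ Pc α then z - (eta : ℂ)
  else z

/-- The translated cone exchange F = G ∘ E. -/
def Fmap {d : ℕ} (α : Fin d → ℝ) (τ : Equiv.Perm (Fin d)) (lam eta : ℝ) (z : ℂ) : ℂ :=
  Gmap α lam eta (Emap α τ z)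

/-- The set of positive times at which the orbit of z visits P_c. -/
def hitSet {d : ℕ} (α : Fin d → ℝ) (τ : Equiv.Perm (Fin d)) (lam eta : ℝ) (z : ℂ) : Set ℕ :=
  {n : ℕ | 0 < n ∧ (Fmap α τ lam eta)^[n] z ∈ Pc α}

/-- The first hitting time k(z) of z to P_c (0 if the orbit never returns). -/
def hitTime {d : ℕ} (α : Fin d → ℝ) (τ : Equiv.Perm (Fin d)) (lam eta : ℝ) (z : ℂ) : ℕ :=
  sInf (hitSet α τ lam eta z)

/-- The first return map R(z) = F^{k(z)}(z). -/
def Rmap {d : ℕ} (α : Fin d → ℝ) (τ : Equiv.Perm (Fin d)) (lam eta : ℝ) (z : ℂ) : ℂ :=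
  (Fmap α τ lam eta)^[hitTime α τ lam eta z] z

/-- The interval map g_ℓ with middle interval (1, 1+ℓ) of fixed points:
g_ℓ(x) = x+λ on [0,1], x on (1,1+ℓ), x−1 on [1+ℓ, 1+λ]. -/
def gl (lam l x : ℝ) : ℝ :=
  if x ≤ 1 then x + lam else if x < 1 + l then x else x - 1

/-- The interval exchange g(x) = x+λ on [0,1], x−1 on (1, 1+λ]. -/
def g0 (lam x : ℝ) : ℝ := if x ≤ 1 then x + lam else x - 1

/-- The set of positive times at which the g_ℓ-orbit of x visits [1, 1+ℓ]. -/
def hitSetI (lam l x : ℝ) : Set ℕ :=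
  {n : ℕ | 0 < n ∧ (gl lam l)^[n] x ∈ Set.Icc 1 (1 + l)}

/-- The first hitting time n_ℓ(x) of x to [1, 1+ℓ] (as a natural number; 0 if
the orbit never hits). -/
def nhit (lam l x : ℝ) : ℕ := sInf (hitSetI lam l x)

/-- The first hitting time n_ℓ(x) of x to [1, 1+ℓ], with value ∞ ∈ ℕ∪{∞} if the
orbit never hits. -/
def nhitE (lam l x : ℝ) : ℕ∞ := sInf ((fun n : ℕ => (n : ℕ∞)) '' hitSetI lam l x)

/-- The first hitting map r_ℓ(x) = g_ℓ^{n_ℓ(x)}(x). -/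
def rmap (lam l x : ℝ) : ℝ := (gl lam l)^[nhit lam l x] x

/-- r'_ℓ(x) = r_ℓ(x) outside [1,1+ℓ] and x on [1,1+ℓ]. -/
def rmap' (lam l x : ℝ) : ℝ := if x ∈ Set.Icc 1 (1 + l) then x else rmap lam l x

/-- The left bifurcation set Λ_L (hitting times compared in ℕ∪{∞}). -/
def LamL (lam : ℝ) : Set ℝ :=
  {l | 0 < l ∧ l ≤ lam ∧ ∀ l' : ℝ, 0 < l' → l' < l → nhitE lam l 1 < nhitE lam l' 1}

/-- The right bifurcation set Λ_R (hitting times compared in ℕ∪{∞}). -/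
def LamR (lam : ℝ) : Set ℝ :=
  {l | 0 < l ∧ l ≤ lam ∧
    ∀ l' : ℝ, 0 < l' → l' < l → nhitE lam l (1 + l) < nhitE lam l' (1 + l')}

/-!
Put ℓ = 2 h cot β with h = Im F(z). On the horizontal line Im w = h, the cone boundaries
arg w = β and arg w = π − β cut out the segment −ℓ/2 ≤ Re w ≤ ℓ/2, which is exactly where the
line meets P_c; to its right lies P_0, to its left P_{d+1}. Off P_c the map E is the identity and
G translates by −1 or +λ, so in the coordinate s(x) = x + 1 + ℓ/2 the map F restricted to the
line is g_ℓ restricted to the complement of [1, 1 + ℓ]. Hence the F-orbit of F(z) follows the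
g_ℓ-orbit of s(Re F(z)) up to its first entrance into [1, 1 + ℓ], and the first entrance times
and entrance points agree.
-/

open Function

section EntranceTime

variable {X Y : Type*}

-- Both times take the junk value `sInf ∅ = 0` on orbits that never reach `A`.
def entranceTime (f : X → X) (A : Set X) (x : X) : ℕ := sInf {n | f^[n] x ∈ A}

def firstHitTime (f : X → X) (A : Set X) (x : X) : ℕ := sInf {n | 0 < n ∧ f^[n] x ∈ A}

variable {f : X → X} {A : Set X} {x : X}

lemma entranceTime_of_mem (hx : x ∈ A) : entranceTime f A x = 0 :=
  Nat.sInf_eq_zero.2 (Or.inl hx)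

lemma firstHitTime_eq_entranceTime_of_notMem (hx : x ∉ A) :
    firstHitTime f A x = entranceTime f A x := by
  refine congrArg sInf (Set.ext fun n => ⟨And.right, fun hn => ⟨Nat.pos_of_ne_zero ?_, hn⟩⟩)
  rintro rfl
  exact hx hn

lemma iterate_firstHitTime_mem (h : {n | 0 < n ∧ f^[n] x ∈ A}.Nonempty) :
    f^[firstHitTime f A x] x ∈ A :=
  (Nat.sInf_mem h).2

lemma firstHitTime_eq_entranceTime_apply_add_one (h : {n | 0 < n ∧ f^[n] x ∈ A}.Nonempty) :
    firstHitTime f A x = entranceTime f A (f x) + 1 := by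
  have hpos : 1 ≤ firstHitTime f A x := (Nat.sInf_mem h).1
  unfold firstHitTime at hpos ⊢
  rw [← Nat.sInf_add hpos]
  simp only [Nat.succ_pos, true_and, iterate_succ_apply]
  rfl

theorem iterate_entranceTime_of_semiconj {g : Y → Y} {B : Set Y} {p : Y → X}
    (hA : ∀ y, p y ∈ A ↔ y ∈ B) (hfg : ∀ y ∉ B, f (p y) = p (g y)) {y : Y}
    (hy : ∃ n, f^[n] (p y) ∈ A) :
    f^[entranceTime f A (p y)] (p y) = p (g^[entranceTime g B y] y) := by
  have iterate_eq : ∀ n, (∀ m < n, g^[m] y ∉ B) → f^[n] (p y) = p (g^[n] y) := by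
    intro n
    induction n with
    | zero => intro; rfl
    | succ n ih =>
      intro hB
      rw [iterate_succ_apply', iterate_succ_apply', ih fun m hm => hB m (hm.trans n.lt_succ_self),
        hfg _ (hB n n.lt_succ_self)]
  set N := entranceTime f A (p y)
  have before : ∀ m < N, g^[m] y ∉ B := by
    intro m
    induction m using Nat.strong_induction_on with
    | _ m ih =>
      intro hm hB
      refine Nat.notMem_of_lt_sInf hm ?_
      rw [Set.mem_ofPred_eq, iterate_eq m fun k hk => ih k hk (hk.trans hm)]
      exact (hA _).2 hB
  have hNB : g^[N] y ∈ B := by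
    rw [← hA, ← iterate_eq N before]
    exact Nat.sInf_mem hy
  have hN : entranceTime g B y = N :=
    le_antisymm (Nat.sInf_le hNB) (le_csInf ⟨N, hNB⟩ fun m hm => not_lt.1 fun h => before m h hm)
  rw [hN, iterate_eq N before]

end EntranceTime

lemma rmap'_eq_iterate_entranceTime (lam l x : ℝ) :
    rmap' lam l x = (gl lam l)^[entranceTime (gl lam l) (Icc 1 (1 + l)) x] x := by
  unfold rmap'
  split_ifs with hx
  · rw [entranceTime_of_mem hx, iterate_zero_apply]
  · exact congrArg (fun n => (gl lam l)^[n] x) (firstHitTime_eq_entranceTime_of_notMem hx)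

namespace Complex

lemma arg_mem_Ioo_of_im_pos {w : ℂ} (hw : 0 < w.im) : arg w ∈ Ioo 0 π :=
  ⟨(arg_nonneg_iff.2 hw.le).lt_of_ne fun h => hw.ne' (arg_eq_zero_iff.1 h.symm).2,
    arg_lt_pi_iff.2 (Or.inr hw.ne')⟩

lemma re_mul_sin_sub_im_mul_cos (w : ℂ) (b : ℝ) :
    w.re * Real.sin b - w.im * Real.cos b = ‖w‖ * Real.sin (b - arg w) := by
  rw [Real.sin_sub, ← norm_mul_cos_arg w, ← norm_mul_sin_arg w]
  ring

variable {w : ℂ} {b : ℝ}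

lemma arg_lt_iff_im_mul_cot_lt_re (hw : 0 < w.im) (hb0 : 0 < b) (hbπ : b < π) :
    arg w < b ↔ w.im * Real.cot b < w.re := by
  obtain ⟨h0, hπ⟩ := arg_mem_Ioo_of_im_pos hw
  have hnorm : 0 < ‖w‖ := norm_pos_iff.2 fun h => by simp [h] at hw
  calc arg w < b ↔ 0 < Real.sin (b - arg w) :=
        ⟨fun h => Real.sin_pos_of_pos_of_lt_pi (by linarith) (by linarith), fun h => not_le.1
          fun hle => h.not_ge (Real.sin_nonpos_of_nonpos_of_neg_pi_le (by linarith) (by linarith))⟩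
    _ ↔ 0 < w.re * Real.sin b - w.im * Real.cos b := by
        rw [re_mul_sin_sub_im_mul_cos, mul_pos_iff_of_pos_left hnorm]
    _ ↔ w.im * Real.cot b < w.re := by
        rw [Real.cot_eq_cos_div_sin, mul_div_assoc',
          div_lt_iff₀ (Real.sin_pos_of_pos_of_lt_pi hb0 hbπ), sub_pos]

lemma lt_arg_iff_re_lt_im_mul_cot (hw : 0 < w.im) (hb0 : 0 < b) (hbπ : b < π) :
    b < arg w ↔ w.re < w.im * Real.cot b := by
  obtain ⟨h0, hπ⟩ := arg_mem_Ioo_of_im_pos hw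
  have hnorm : 0 < ‖w‖ := norm_pos_iff.2 fun h => by simp [h] at hw
  calc b < arg w ↔ Real.sin (b - arg w) < 0 :=
        ⟨fun h => Real.sin_neg_of_neg_of_neg_pi_lt (by linarith) (by linarith), fun h => not_le.1
          fun hle => h.not_ge (Real.sin_nonneg_of_nonneg_of_le_pi (by linarith) (by linarith))⟩
    _ ↔ w.re * Real.sin b - w.im * Real.cos b < 0 := by
        rw [re_mul_sin_sub_im_mul_cos, ← smul_eq_mul, smul_neg_iff_of_pos_left hnorm]
    _ ↔ w.re < w.im * Real.cot b := by
        rw [Real.cot_eq_cos_div_sin, mul_div_assoc',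
          lt_div_iff₀ (Real.sin_pos_of_pos_of_lt_pi hb0 hbπ), sub_neg]

lemma pi_sub_lt_arg_iff_re_lt_neg_im_mul_cot (hw : 0 < w.im) (hb0 : 0 < b) (hbπ : b < π) :
    π - b < arg w ↔ w.re < -(w.im * Real.cot b) := by
  rw [lt_arg_iff_re_lt_im_mul_cot hw (by linarith) (by linarith), Real.cot_eq_cos_div_sin,
    Real.cos_pi_sub, Real.sin_pi_sub, neg_div, mul_neg, ← Real.cot_eq_cos_div_sin]

end Complex

section Cones

variable {d : ℕ} {α : Fin d → ℝ}

lemma sig_zero (α : Fin d → ℝ) : sig α 0 = beta α := by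
  simp [sig]

lemma sig_eq_pi_sub_beta (α : Fin d → ℝ) : sig α d = π - beta α := by
  rw [sig, Finset.filter_true_of_mem fun k _ => k.isLt, beta]
  ring

lemma monotone_sig (hα : ∀ j, 0 ≤ α j) : Monotone (sig α) := fun _ _ hij =>
  add_le_add_right (Finset.sum_le_sum_of_subset_of_nonneg
    (Finset.monotone_filter_right _ fun _ _ hk => lt_of_lt_of_le hk hij)
    fun k _ _ => hα k) _

lemma beta_pos (hsum : ∑ k, α k < π) : 0 < beta α := by
  rw [beta]
  linarith

lemma beta_le_pi_div_two (hα : ∀ j, 0 ≤ α j) : beta α ≤ π / 2 := by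
  rw [beta]
  linarith [Finset.sum_nonneg fun k (_ : k ∈ Finset.univ) => hα k]

lemma mem_Pc_iff (hd : 1 ≤ d) (hα : ∀ j, 0 ≤ α j) {w : ℂ} (hw : 0 ≤ w.im) :
    w ∈ Pc α ↔ beta α ≤ arg w ∧ arg w ≤ π - beta α := by
  rw [← sig_eq_pi_sub_beta α, ← sig_zero α, Pc, mem_iUnion]
  constructor
  · rintro ⟨j, -, hlow, hup⟩
    refine ⟨?_, hup.trans (monotone_sig hα (Nat.succ_le_of_lt j.isLt))⟩
    split_ifs at hlow
    · exact hlow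
    · exact (monotone_sig hα (Nat.zero_le _)).trans hlow.le
  · rintro ⟨hlow, hup⟩
    rcases hlow.eq_or_lt with heq | hlt
    · refine ⟨⟨0, hd⟩, hw, ?_, ?_⟩
      · simp [heq]
      · exact heq ▸ monotone_sig hα (Nat.zero_le 1)
    · obtain ⟨i, hi, hmem⟩ := mem_iUnion₂.1 (Ioc_subset_biUnion_Ioc d (sig α) ⟨hlt, hup⟩)
      refine ⟨⟨i, Finset.mem_range.1 hi⟩, hw, ?_, hmem.2⟩
      split_ifs with hi0
      · obtain rfl : i = 0 := hi0
        exact hmem.1.le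
      · exact hmem.1

lemma Emap_of_notMem_Pc (τ : Equiv.Perm (Fin d)) {w : ℂ} (hw : w ∉ Pc α) : Emap α τ w = w :=
  dif_neg fun ⟨j, hj⟩ => hw (mem_iUnion.2 ⟨j, hj⟩)

variable (τ : Equiv.Perm (Fin d)) (lam eta : ℝ) {w : ℂ}

lemma Fmap_of_mem_P0 (hw : w ∈ P0 α) (hwc : w ∉ Pc α) : Fmap α τ lam eta w = w - 1 := by
  rw [Fmap, Emap_of_notMem_Pc τ hwc, Gmap, if_pos hw]

lemma Fmap_of_mem_Pend (hw : w ∈ Pend α) (hw0 : w ∉ P0 α) (hwc : w ∉ Pc α) :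
    Fmap α τ lam eta w = w + lam := by
  rw [Fmap, Emap_of_notMem_Pc τ hwc, Gmap, if_neg hw0, if_pos hw]

end Cones

section Line

variable {d : ℕ} {α : Fin d → ℝ} {h l t : ℝ}

/-- The point of the line `Im w = h` at which the paper's coordinate `s(Re w) = Re w + 1 + l / 2`
equals `t`. -/
def lineLift (h l t : ℝ) : ℂ := ⟨t - 1 - l / 2, h⟩

lemma lineLift_mem_P0 (hα : ∀ j, 0 ≤ α j) (hsum : ∑ k, α k < π) (hh : 0 < h)
    (hl : l = 2 * h * Real.cot (beta α)) (ht : 1 + l < t) : lineLift h l t ∈ P0 α := by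
  refine ⟨hh.le, arg_nonneg_iff.2 hh.le, ?_⟩
  rw [arg_lt_iff_im_mul_cot_lt_re hh (beta_pos hsum)
    (by linarith [beta_le_pi_div_two hα, Real.pi_pos])]
  simp only [lineLift]
  linarith

lemma lineLift_mem_Pend (hα : ∀ j, 0 ≤ α j) (hsum : ∑ k, α k < π) (hh : 0 < h)
    (hl : l = 2 * h * Real.cot (beta α)) (ht : t < 1) : lineLift h l t ∈ Pend α := by
  refine ⟨hh.le, ?_, arg_le_pi _⟩
  rw [pi_sub_lt_arg_iff_re_lt_neg_im_mul_cot hh (beta_pos hsum)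
    (by linarith [beta_le_pi_div_two hα, Real.pi_pos])]
  simp only [lineLift]
  linarith

lemma lineLift_mem_Pc_iff (hd : 1 ≤ d) (hα : ∀ j, 0 ≤ α j) (hsum : ∑ k, α k < π) (hh : 0 < h)
    (hl : l = 2 * h * Real.cot (beta α)) : lineLift h l t ∈ Pc α ↔ t ∈ Icc 1 (1 + l) := by
  have hβ : beta α < π := by linarith [beta_le_pi_div_two hα, Real.pi_pos]
  rw [mem_Pc_iff hd hα hh.le, ← not_lt, ← not_lt, arg_lt_iff_im_mul_cot_lt_re hh (beta_pos hsum) hβ,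
    pi_sub_lt_arg_iff_re_lt_neg_im_mul_cot hh (beta_pos hsum) hβ, mem_Icc]
  simp only [lineLift, not_lt]
  constructor <;> rintro ⟨h₁, h₂⟩ <;> constructor <;> linarith

lemma Fmap_lineLift (hd : 1 ≤ d) (hα : ∀ j, 0 ≤ α j) (hsum : ∑ k, α k < π) (hh : 0 < h)
    (hl : l = 2 * h * Real.cot (beta α)) (τ : Equiv.Perm (Fin d)) (lam eta : ℝ)
    (ht : t ∉ Icc 1 (1 + l)) : Fmap α τ lam eta (lineLift h l t) = lineLift h l (gl lam l t) := by
  have hβ := beta_le_pi_div_two hα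
  have hl0 : 0 ≤ l := by
    rw [hl, Real.cot_eq_cos_div_sin]
    exact mul_nonneg (by positivity) (div_nonneg (Real.cos_nonneg_of_mem_Icc
      ⟨by linarith [beta_pos hsum], hβ⟩) (Real.sin_nonneg_of_nonneg_of_le_pi
        (beta_pos hsum).le (by linarith [Real.pi_pos])))
  have hwc : lineLift h l t ∉ Pc α := (lineLift_mem_Pc_iff hd hα hsum hh hl).not.2 ht
  rcases not_and_or.1 ht with ht | ht <;> rw [not_le] at ht
  · have hw0 : lineLift h l t ∉ P0 α := fun hw0 => by
      linarith [hw0.2.2, (lineLift_mem_Pend hα hsum hh hl ht).2.1]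
    rw [Fmap_of_mem_Pend τ lam eta (lineLift_mem_Pend hα hsum hh hl ht) hw0 hwc, gl,
      if_pos ht.le]
    exact Complex.ext (by simp only [lineLift, add_re, ofReal_re]; ring)
      (by simp only [lineLift, add_im, ofReal_im, add_zero])
  · rw [Fmap_of_mem_P0 τ lam eta (lineLift_mem_P0 hα hsum hh hl ht) hwc, gl,
      if_neg (by linarith), if_neg (by linarith)]
    exact Complex.ext (by simp only [lineLift, sub_re, one_re]; ring)
      (by simp only [lineLift, sub_im, one_im, sub_zero])

end Line

theorem return_map_via_hitting_map_general
    (d : ℕ) (hd : 1 ≤ d) (α : Fin d → ℝ) (hpos : ∀ j, 0 < α j) (hsum : ∑ k, α k < π)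
    (τ : Equiv.Perm (Fin d)) (lam eta : ℝ)
    (z : ℂ)
    (him : 0 < (Fmap α τ lam eta z).im)
    (l : ℝ) (hldef : l = 2 * (Fmap α τ lam eta z).im * (Real.cos (beta α) / Real.sin (beta α)))
    (hfin : (hitSet α τ lam eta z).Nonempty) :
    Rmap α τ lam eta z =
      Complex.ofReal (rmap' lam l ((Fmap α τ lam eta z).re + 1 + l / 2) - 1 - l / 2)
        + Complex.ofReal (Fmap α τ lam eta z).im * Complex.I := by
  set F := Fmap α τ lam eta
  set w := F z
  set x := w.re + 1 + l / 2
  rw [← Real.cot_eq_cos_div_sin] at hldef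
  have hα : ∀ j, 0 ≤ α j := fun j => (hpos j).le
  have hwx : lineLift w.im l x = w := Complex.ext (by simp only [lineLift, x]; ring) rfl
  have hk : firstHitTime F (Pc α) z = entranceTime F (Pc α) w + 1 :=
    firstHitTime_eq_entranceTime_apply_add_one hfin
  have hw : F^[entranceTime F (Pc α) w] w ∈ Pc α := by
    simpa only [hk, iterate_succ_apply] using iterate_firstHitTime_mem (f := F) hfin
  have hFw := iterate_entranceTime_of_semiconj
    (fun _ => lineLift_mem_Pc_iff hd hα hsum him hldef)
    (fun _ ht => Fmap_lineLift hd hα hsum him hldef τ lam eta ht) (y := x)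
    (by rw [hwx]; exact ⟨_, hw⟩)
  calc Rmap α τ lam eta z = F^[entranceTime F (Pc α) w] w := by
        rw [Rmap, show hitTime α τ lam eta z = firstHitTime F (Pc α) z from rfl, hk,
          iterate_succ_apply]
    _ = lineLift w.im l (rmap' lam l x) := by
        rw [rmap'_eq_iterate_entranceTime, ← hFw, hwx]
    _ = _ := Complex.mk_eq_add_mul_I _ _

/-- **Lemma 2.2 (first return map via the first hitting map of the interval
model).** For z ∈ P_c with Im(F(z)) > 0 and ℓ = 2·Im(F(z))·cot β ≤ λ, if the
return time of z to P_c is finite then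
R(z) = r'_ℓ(s(Re F(z))) − 1 − ℓ/2 + i·Im F(z), where s(x) = x + 1 + ℓ/2. -/
theorem return_map_via_hitting_map
    (d : ℕ) (hd : 1 ≤ d) (α : Fin d → ℝ) (hpos : ∀ j, 0 < α j) (hsum : ∑ k, α k < π)
    (τ : Equiv.Perm (Fin d)) (lam eta : ℝ)
    (hlam : 0 < lam) (hirr : Irrational lam) (heta0 : 0 < eta) (hetal : eta < lam)
    (z : ℂ) (hz : z ∈ Pc α)
    (him : 0 < (Fmap α τ lam eta z).im)
    (l : ℝ) (hldef : l = 2 * (Fmap α τ lam eta z).im * (Real.cos (beta α) / Real.sin (beta α)))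
    (hl : l ≤ lam)
    (hfin : (hitSet α τ lam eta z).Nonempty) :
    Rmap α τ lam eta z =
      Complex.ofReal (rmap' lam l ((Fmap α τ lam eta z).re + 1 + l / 2) - 1 - l / 2)
        + Complex.ofReal (Fmap α τ lam eta z).im * Complex.I :=
  return_map_via_hitting_map_general d hd α hpos hsum τ lam eta z him l hldef hfin

end
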